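/- arXiv:2105.11369 — 2 statements merged into one kernel-verified Lean document; each statement's English description precedes it below -/
import Mathlib

section
/- Let 0 < r ≤ 1/4 and define ρ_r := r·(1 − 3r − 2r²)/(1 − r − 2r²). Suppose Λ(x₊) and Λ(y) are positive definite, s := −g(y), and ‖x₊ − y‖_{x₊} ≤ r²/(1 − 2r). Let e ∈ ℝ^U, let Δc ≥ 0 be a real number, and set s₊ := s − Δc·e; suppose ‖x₊ − H(x₊)⁻¹·s₊‖_{x₊} = r/(r + 1). Then Δc·‖e‖*_y ≥ ρ_r. -/
/-!
The barrier derivatives `g`, `H` (hence both local norms) are unchanged when `Λ` is replaced by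
`v ↦ Cᵀ Λ(v) C` with `C` invertible, so one may assume `Λ(x₊) = 1`. Then
`τ := ‖x₊ − y‖_{x₊}` is the Frobenius norm of `1 − Λ(y)`, which bounds its spectrum, so
`Λ(y) ⪰ (1 − τ)·1`. This gives `(1 − τ)‖v‖_y ≤ ‖v‖_{x₊}` for all `v`, and Cauchy–Schwarz for the
trace form gives `(g(y) − g(x₊))·u ≤ ‖x₊ − y‖_y ‖u‖_{x₊}`, since `‖1 − Λ(y)⁻¹‖_F = ‖x₊ − y‖_y`.
As `x₊ − H(x₊)⁻¹s₊ = H(x₊)⁻¹(g(y) − g(x₊) + Δc·e)`, the hypothesis says that the dual norm of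
`g(y) − g(x₊) + Δc·e` at `x₊` is `r/(r+1)`, and the two estimates bound it by
`(τ + Δc‖e‖*_y)/(1 − τ)`. With `τ ≤ r²/(1 − 2r)` this rearranges to `Δc‖e‖*_y ≥ ρ_r`.
-/

open Matrix

/-- The gradient of the barrier `f(x) = -log det Λ(x)`:
`g(x)_i = -tr(Λ(x)⁻¹ · Λ(e_i))` (with the total matrix inverse, `0` for singular matrices). -/
noncomputable def grad {U L : ℕ} (Lam : (Fin U → ℝ) →ₗ[ℝ] Matrix (Fin L) (Fin L) ℝ)
    (x : Fin U → ℝ) : Fin U → ℝ :=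
  fun i => -((Lam x)⁻¹ * Lam (Pi.single i 1)).trace

/-- The Hessian of the barrier: `H(x)_{ij} = tr(Λ(x)⁻¹ Λ(e_i) Λ(x)⁻¹ Λ(e_j))`. -/
noncomputable def hess {U L : ℕ} (Lam : (Fin U → ℝ) →ₗ[ℝ] Matrix (Fin L) (Fin L) ℝ)
    (x : Fin U → ℝ) : Matrix (Fin U) (Fin U) ℝ :=
  Matrix.of fun i j =>
    ((Lam x)⁻¹ * Lam (Pi.single i 1) * (Lam x)⁻¹ * Lam (Pi.single j 1)).trace

/-- The local norm `‖v‖_x = (vᵀ H(x) v)^{1/2}`. -/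
noncomputable def locNorm {U L : ℕ} (Lam : (Fin U → ℝ) →ₗ[ℝ] Matrix (Fin L) (Fin L) ℝ)
    (x v : Fin U → ℝ) : ℝ :=
  Real.sqrt (v ⬝ᵥ (hess Lam x).mulVec v)

/-- The dual local norm `‖t‖*_x = (tᵀ H(x)⁻¹ t)^{1/2}`. -/
noncomputable def dualNorm {U L : ℕ} (Lam : (Fin U → ℝ) →ₗ[ℝ] Matrix (Fin L) (Fin L) ℝ)
    (x t : Fin U → ℝ) : ℝ :=
  Real.sqrt (t ⬝ᵥ (hess Lam x)⁻¹.mulVec t)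

namespace Matrix

section

variable {n : Type*} [Fintype n]

theorem trace_transpose_mul_self_nonneg (A : Matrix n n ℝ) : 0 ≤ (Aᵀ * A).trace := by
  simpa [conjTranspose_eq_transpose_of_trivial] using
    (posSemidef_conjTranspose_mul_self A).trace_nonneg

theorem trace_transpose_mul_self_pos {A : Matrix n n ℝ} (hA : A ≠ 0) : 0 < (Aᵀ * A).trace :=
  (trace_transpose_mul_self_nonneg A).lt_of_ne' fun h => hA <| by
    rwa [← conjTranspose_eq_transpose_of_trivial, trace_conjTranspose_mul_self_eq_zero_iff] at h

theorem trace_transpose_mul_sq_le (A B : Matrix n n ℝ) :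
    (Aᵀ * B).trace ^ 2 ≤ (Aᵀ * A).trace * (Bᵀ * B).trace := by
  let F : LinearMap.BilinForm ℝ (Matrix n n ℝ) :=
    LinearMap.mk₂ ℝ (fun A B => (Aᵀ * B).trace) (by simp [Matrix.add_mul])
      (by simp) (by simp [Matrix.mul_add]) (by simp)
  have hsymm : LinearMap.IsSymm F := ⟨fun A B => by
    simp [F, ← trace_transpose (Aᵀ * B)]⟩
  exact F.apply_sq_le_of_symm trace_transpose_mul_self_nonneg hsymm A B

theorem trace_transpose_mul_le (A B : Matrix n n ℝ) :
    (Aᵀ * B).trace ≤ √(Aᵀ * A).trace * √(Bᵀ * B).trace := by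
  rw [← Real.sqrt_mul (trace_transpose_mul_self_nonneg A)]
  exact (le_abs_self _).trans (Real.abs_le_sqrt (trace_transpose_mul_sq_le A B))

theorem dotProduct_mulVec_sq_le (M : Matrix n n ℝ) (v : n → ℝ) :
    (v ⬝ᵥ M *ᵥ v) ^ 2 ≤ (Mᵀ * M).trace * (v ⬝ᵥ v) ^ 2 := by
  have hv : ((vecMulVec v v)ᵀ * vecMulVec v v).trace = (v ⬝ᵥ v) ^ 2 := by
    simp [vecMulVec_mul_vecMulVec, trace_vecMulVec, sq]
  have hM : (Mᵀ * vecMulVec v v).trace = v ⬝ᵥ M *ᵥ v := by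
    rw [mul_vecMulVec, trace_vecMulVec, mulVec_transpose, dotProduct_mulVec, dotProduct_comm]
  simpa only [hv, hM] using trace_transpose_mul_sq_le M (vecMulVec v v)

theorem PosSemidef.dotProduct_mulVec_sq_le {K : Matrix n n ℝ} (hK : K.PosSemidef) (a b : n → ℝ) :
    (a ⬝ᵥ K *ᵥ b) ^ 2 ≤ (a ⬝ᵥ K *ᵥ a) * (b ⬝ᵥ K *ᵥ b) := by
  have hKt : Kᵀ = K := (isHermitian_iff_isSymm.mp hK.isHermitian).eq
  let F : LinearMap.BilinForm ℝ (n → ℝ) :=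
    LinearMap.mk₂ ℝ (fun a b => a ⬝ᵥ K *ᵥ b) (by simp [add_dotProduct]) (by simp)
      (by simp [mulVec_add]) (by simp [mulVec_smul])
  have hsymm : LinearMap.IsSymm F := ⟨fun a b => by
    change a ⬝ᵥ K *ᵥ b = b ⬝ᵥ K *ᵥ a
    rw [dotProduct_mulVec, ← mulVec_transpose, hKt, dotProduct_comm]⟩
  have hF (a : n → ℝ) : 0 ≤ F a a := by
    change 0 ≤ a ⬝ᵥ K *ᵥ a
    simpa using hK.dotProduct_mulVec_nonneg a
  exact F.apply_sq_le_of_symm hF hsymm a b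

end

variable {n : Type*} [Fintype n] [DecidableEq n]

theorem PosSemidef.trace_mul_nonneg {A B : Matrix n n ℝ} (hA : A.PosSemidef) (hB : B.PosSemidef) :
    0 ≤ (A * B).trace := by
  obtain ⟨D, rfl⟩ : ∃ D : Matrix n n ℝ, B = star D * D := by
    open scoped MatrixOrder in exact CStarAlgebra.nonneg_iff_eq_star_mul_self.mp hB.nonneg
  rw [← Matrix.mul_assoc, trace_mul_comm, ← Matrix.mul_assoc]
  exact (hA.mul_mul_conjTranspose_same D).trace_nonneg

theorem trace_mul_mul_mul_le {C A : Matrix n n ℝ} (hC : C.PosSemidef) {c : ℝ} (hc : 0 ≤ c)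
    (hCc : (c • 1 - C).PosSemidef) (hA : A.IsSymm) :
    (C * A * C * A).trace ≤ c ^ 2 * (A * A).trace := by
  have hAh : Aᴴ = A := isHermitian_iff_isSymm.mpr hA
  have hACA : (A * C * A).PosSemidef := by
    simpa only [hAh] using hC.conjTranspose_mul_mul_same A
  have hAA : (A * A).PosSemidef := by simpa only [hAh] using posSemidef_conjTranspose_mul_self A
  have h₁ := hACA.trace_mul_nonneg hCc
  have h₂ := hCc.trace_mul_nonneg hAA
  simp only [Matrix.mul_sub, Matrix.sub_mul, Matrix.mul_smul, Matrix.smul_mul, Matrix.mul_one,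
    Matrix.one_mul, trace_sub, trace_smul, smul_eq_mul, sub_nonneg] at h₁ h₂
  calc (C * A * C * A).trace = (A * C * A * C).trace := by
        rw [trace_mul_comm, ← Matrix.mul_assoc, ← Matrix.mul_assoc]
    _ ≤ c * (A * C * A).trace := h₁
    _ = c * (C * (A * A)).trace := by
        rw [trace_mul_comm (A * C), ← Matrix.mul_assoc, trace_mul_comm]
    _ ≤ c * (c * (A * A).trace) := mul_le_mul_of_nonneg_left h₂ hc
    _ = c ^ 2 * (A * A).trace := by ring

theorem PosDef.posSemidef_inv_smul_one_sub_inv {Y : Matrix n n ℝ} (hY : Y.PosDef) {a : ℝ}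
    (ha : 0 < a) (h : ∀ v, a * (v ⬝ᵥ v) ≤ v ⬝ᵥ Y *ᵥ v) : (a⁻¹ • 1 - Y⁻¹).PosSemidef := by
  refine .of_dotProduct_mulVec_nonneg ?_ fun v => ?_
  · exact (isHermitian_one.smul (IsSelfAdjoint.all _)).sub hY.inv.isHermitian
  set w := Y⁻¹ *ᵥ v
  have hYw : Y *ᵥ w = v := by
    rw [mulVec_mulVec, mul_nonsing_inv _ hY.det_pos.ne'.isUnit, one_mulVec]
  have hq : v ⬝ᵥ Y⁻¹ *ᵥ v = w ⬝ᵥ Y *ᵥ w := by rw [hYw, dotProduct_comm]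
  have hcs : (w ⬝ᵥ Y *ᵥ w) ^ 2 ≤ (w ⬝ᵥ w) * (v ⬝ᵥ v) := by
    simpa [hYw] using PosSemidef.one.dotProduct_mulVec_sq_le w v
  have hq0 : 0 ≤ w ⬝ᵥ Y *ᵥ w := by simpa using hY.posSemidef.dotProduct_mulVec_nonneg w
  have hvv : 0 ≤ v ⬝ᵥ v := by simpa using PosSemidef.one.dotProduct_mulVec_nonneg v
  have hqv : a * (w ⬝ᵥ Y *ᵥ w) ≤ v ⬝ᵥ v := by
    rcases hq0.eq_or_lt with h0 | hpos
    · rw [← h0, mul_zero]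
      exact hvv
    · nlinarith [h w]
  simp only [star_trivial, sub_mulVec, dotProduct_sub, smul_mulVec, one_mulVec, dotProduct_smul,
    smul_eq_mul, sub_nonneg, hq]
  rwa [le_inv_mul_iff₀ ha]

theorem PosDef.trace_inv_mul_inv_mul_le {Y A : Matrix n n ℝ} (hY : Y.PosDef) (hA : A.IsSymm)
    {τ : ℝ} (hτ0 : 0 ≤ τ) (hτ1 : τ < 1) (hYτ : ((1 - Y) * (1 - Y)).trace ≤ τ ^ 2) :
    (1 - τ) ^ 2 * (Y⁻¹ * A * Y⁻¹ * A).trace ≤ (A * A).trace := by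
  have hM : (1 - Y)ᵀ = 1 - Y := by
    rw [transpose_sub, transpose_one, (isHermitian_iff_isSymm.mp hY.isHermitian).eq]
  have hYge : ∀ v, (1 - τ) * (v ⬝ᵥ v) ≤ v ⬝ᵥ Y *ᵥ v := by
    intro v
    have hvv : 0 ≤ v ⬝ᵥ v := by simpa using PosSemidef.one.dotProduct_mulVec_nonneg v
    have hsq : (v ⬝ᵥ (1 - Y) *ᵥ v) ^ 2 ≤ (τ * (v ⬝ᵥ v)) ^ 2 := by
      have := (1 - Y).dotProduct_mulVec_sq_le v
      rw [hM] at this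
      nlinarith [sq_nonneg (v ⬝ᵥ v)]
    have := le_of_sq_le_sq hsq (mul_nonneg hτ0 hvv)
    simp only [sub_mulVec, one_mulVec, dotProduct_sub] at this
    linarith
  have hpos : 0 < 1 - τ := sub_pos.mpr hτ1
  have hinv := hY.posSemidef_inv_smul_one_sub_inv hpos hYge
  have := trace_mul_mul_mul_le hY.inv.posSemidef (inv_nonneg.mpr hpos.le) hinv hA
  rw [inv_pow] at this
  rwa [← le_inv_mul_iff₀ (by positivity)]

namespace PosDef

variable {H : Matrix n n ℝ}

theorem mulVec_inv_mulVec (hH : H.PosDef) (t : n → ℝ) : H *ᵥ (H⁻¹ *ᵥ t) = t := by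
  rw [mulVec_mulVec, mul_nonsing_inv _ hH.det_pos.ne'.isUnit, one_mulVec]

theorem inv_mulVec_dotProduct_mulVec_inv_mulVec (hH : H.PosDef) (t : n → ℝ) :
    H⁻¹ *ᵥ t ⬝ᵥ H *ᵥ (H⁻¹ *ᵥ t) = t ⬝ᵥ H⁻¹ *ᵥ t := by
  rw [hH.mulVec_inv_mulVec, dotProduct_comm]

theorem dotProduct_le_sqrt_mul_sqrt (hH : H.PosDef) (t v : n → ℝ) :
    t ⬝ᵥ v ≤ √(t ⬝ᵥ H⁻¹ *ᵥ t) * √(v ⬝ᵥ H *ᵥ v) := by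
  have ht : t ⬝ᵥ v = H⁻¹ *ᵥ t ⬝ᵥ H *ᵥ v := by
    rw [dotProduct_mulVec, ← mulVec_transpose, (isHermitian_iff_isSymm.mp hH.isHermitian).eq,
      hH.mulVec_inv_mulVec]
  have hcs := hH.posSemidef.dotProduct_mulVec_sq_le (H⁻¹ *ᵥ t) v
  rw [hH.inv_mulVec_dotProduct_mulVec_inv_mulVec, ← ht] at hcs
  rw [← Real.sqrt_mul (by simpa using hH.inv.posSemidef.dotProduct_mulVec_nonneg t)]
  exact (le_abs_self _).trans (Real.abs_le_sqrt hcs)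

theorem sqrt_dotProduct_inv_mulVec_le (hH : H.PosDef) {t : n → ℝ} {m : ℝ} (hm : 0 ≤ m)
    (h : ∀ v, t ⬝ᵥ v ≤ m * √(v ⬝ᵥ H *ᵥ v)) : √(t ⬝ᵥ H⁻¹ *ᵥ t) ≤ m := by
  have ht := h (H⁻¹ *ᵥ t)
  rw [hH.inv_mulVec_dotProduct_mulVec_inv_mulVec] at ht
  have h0 : 0 ≤ t ⬝ᵥ H⁻¹ *ᵥ t := by simpa using hH.inv.posSemidef.dotProduct_mulVec_nonneg t
  rcases h0.eq_or_lt with hz | hpos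
  · rwa [← hz, Real.sqrt_zero]
  · have hs := Real.sqrt_pos.mpr hpos
    nlinarith [Real.mul_self_sqrt h0]

end PosDef

end Matrix

section Barrier

variable {U L : ℕ} (Lam : (Fin U → ℝ) →ₗ[ℝ] Matrix (Fin L) (Fin L) ℝ)

theorem sum_mul_trace_apply_single (B C : Matrix (Fin L) (Fin L) ℝ) (v : Fin U → ℝ) :
    ∑ i, v i * (B * Lam (Pi.single i 1) * C).trace = (B * Lam v * C).trace := by
  have hv : v = ∑ i, v i • Pi.single i 1 := by
    simp_rw [← Pi.single_smul', smul_eq_mul, mul_one, Finset.univ_sum_single]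
  conv_rhs => rw [hv]
  simp [Matrix.mul_sum, Matrix.sum_mul, trace_sum]

theorem hess_mulVec_apply (x w : Fin U → ℝ) (i : Fin U) :
    (hess Lam x *ᵥ w) i = ((Lam x)⁻¹ * Lam (Pi.single i 1) * ((Lam x)⁻¹ * Lam w)).trace := by
  rw [← Matrix.mul_one ((Lam x)⁻¹ * Lam w), ← Matrix.mul_assoc, ← Matrix.mul_assoc,
    ← sum_mul_trace_apply_single]
  simp [mulVec, dotProduct, hess, mul_comm]

theorem dotProduct_hess_mulVec (x v w : Fin U → ℝ) :
    v ⬝ᵥ hess Lam x *ᵥ w = ((Lam x)⁻¹ * Lam v * (Lam x)⁻¹ * Lam w).trace := by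
  simp only [dotProduct, hess_mulVec_apply]
  rw [sum_mul_trace_apply_single]
  simp only [Matrix.mul_assoc]

theorem grad_dotProduct (x u : Fin U → ℝ) :
    grad Lam x ⬝ᵥ u = -((Lam x)⁻¹ * Lam u).trace := by
  rw [← Matrix.mul_one (Lam u), ← Matrix.mul_assoc, ← sum_mul_trace_apply_single]
  simp [grad, dotProduct, mul_comm]

theorem hess_mulVec_self {x : Fin U → ℝ} (hx : IsUnit (Lam x).det) :
    hess Lam x *ᵥ x = -grad Lam x := by
  ext i
  rw [hess_mulVec_apply, nonsing_inv_mul _ hx, Matrix.mul_one]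
  simp [grad]

theorem hess_isSymm (x : Fin U → ℝ) : (hess Lam x).IsSymm :=
  IsSymm.ext fun i j => by
    simp only [hess, of_apply]
    rw [Matrix.mul_assoc, trace_mul_comm, Matrix.mul_assoc]
    simp only [Matrix.mul_assoc]

theorem sub_hess_inv_mulVec_eq {x : Fin U → ℝ} (hH : IsUnit (hess Lam x).det)
    (hx : IsUnit (Lam x).det) (s : Fin U → ℝ) :
    x - (hess Lam x)⁻¹ *ᵥ s = (hess Lam x)⁻¹ *ᵥ (-grad Lam x - s) := by
  rw [← hess_mulVec_self Lam hx, mulVec_sub, mulVec_mulVec, nonsing_inv_mul _ hH, one_mulVec]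

end Barrier

section Congruence

variable {U L : ℕ} (C : Matrix (Fin L) (Fin L) ℝ)
  (Lam : (Fin U → ℝ) →ₗ[ℝ] Matrix (Fin L) (Fin L) ℝ)

def congrMap : (Fin U → ℝ) →ₗ[ℝ] Matrix (Fin L) (Fin L) ℝ where
  toFun v := Cᵀ * Lam v * C
  map_add' v w := by simp [Matrix.mul_add, Matrix.add_mul]
  map_smul' c v := by simp

@[simp]
theorem congrMap_apply (v : Fin U → ℝ) : congrMap C Lam v = Cᵀ * Lam v * C := rfl

variable {C}

theorem congr_inv_mul_congr (hC : IsUnit C.det) (A B : Matrix (Fin L) (Fin L) ℝ) :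
    (Cᵀ * A * C)⁻¹ * (Cᵀ * B * C) = C⁻¹ * (A⁻¹ * B) * C := by
  have hCt : IsUnit Cᵀ.det := by rwa [det_transpose]
  simp only [Matrix.mul_inv_rev, Matrix.mul_assoc, nonsing_inv_mul_cancel_left _ _ hCt]

theorem grad_congrMap (hC : IsUnit C.det) : grad (congrMap C Lam) = grad Lam := by
  ext x i
  simp only [grad, congrMap_apply, congr_inv_mul_congr hC,
    trace_conj' ((isUnit_iff_isUnit_det C).mpr hC)]

theorem hess_congrMap (hC : IsUnit C.det) : hess (congrMap C Lam) = hess Lam := by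
  ext x i j
  have hC' : IsUnit C := (isUnit_iff_isUnit_det C).mpr hC
  have split (P A B : Matrix (Fin L) (Fin L) ℝ) :
      P⁻¹ * A * P⁻¹ * B = (P⁻¹ * A) * (P⁻¹ * B) := by
    simp only [Matrix.mul_assoc]
  have conj (X Y : Matrix (Fin L) (Fin L) ℝ) :
      C⁻¹ * X * C * (C⁻¹ * Y * C) = C⁻¹ * (X * Y) * C := by
    simp only [Matrix.mul_assoc, mul_nonsing_inv_cancel_left _ _ hC]
  simp only [hess, of_apply, congrMap_apply]
  rw [split, split, congr_inv_mul_congr hC, congr_inv_mul_congr hC, conj, trace_conj' hC']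

theorem locNorm_congrMap (hC : IsUnit C.det) : locNorm (congrMap C Lam) = locNorm Lam := by
  ext x v
  rw [locNorm, locNorm, hess_congrMap Lam hC]

theorem posDef_congrMap_apply (hC : IsUnit C.det) {x : Fin U → ℝ} (hx : (Lam x).PosDef) :
    (congrMap C Lam x).PosDef := by
  have hCinj : Function.Injective C.mulVec :=
    mulVec_injective_iff_isUnit.mpr ((isUnit_iff_isUnit_det C).mpr hC)
  simpa [conjTranspose_eq_transpose_of_trivial] using hx.conjTranspose_mul_mul_same hCinj

theorem isSymm_congrMap_apply (hsym : ∀ v, (Lam v).IsSymm) (v : Fin U → ℝ) :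
    (congrMap C Lam v).IsSymm := by
  simp [IsSymm, transpose_mul, (hsym v).eq, Matrix.mul_assoc]

theorem congrMap_injective (hC : IsUnit C.det) (hinj : Function.Injective Lam) :
    Function.Injective (congrMap C Lam) := by
  intro v w h
  have hC' : IsUnit C := (isUnit_iff_isUnit_det C).mpr hC
  have hCt : IsUnit Cᵀ := (isUnit_iff_isUnit_det _).mpr (by rwa [det_transpose])
  exact hinj (hCt.mul_left_cancel (hC'.mul_right_cancel h))

theorem exists_congrMap_apply_eq_one {x : Fin U → ℝ} (hx : (Lam x).PosDef) :
    ∃ C : Matrix (Fin L) (Fin L) ℝ, IsUnit C.det ∧ congrMap C Lam x = 1 := by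
  obtain ⟨D, hD, hDD⟩ : ∃ D, IsUnit D ∧ Lam x = star D * D := by
    open scoped MatrixOrder in
    exact CStarAlgebra.isStrictlyPositive_iff_eq_star_mul_self.mp hx.isStrictlyPositive
  have hDdet : IsUnit D.det := (isUnit_iff_isUnit_det D).mp hD
  refine ⟨D⁻¹, isUnit_nonsing_inv_det D hDdet, ?_⟩
  rw [congrMap_apply, hDD, star_eq_conjTranspose, conjTranspose_eq_transpose_of_trivial,
    ← Matrix.mul_assoc, ← transpose_mul, mul_nonsing_inv _ hDdet, transpose_one, Matrix.one_mul,
    mul_nonsing_inv _ hDdet]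

end Congruence

section SelfConcordance

variable {U L : ℕ} {Lam : (Fin U → ℝ) →ₗ[ℝ] Matrix (Fin L) (Fin L) ℝ}

theorem hess_posDef (hinj : Function.Injective Lam) (hsym : ∀ v, (Lam v).IsSymm)
    {x : Fin U → ℝ} (hx : (Lam x).PosDef) : (hess Lam x).PosDef := by
  wlog hx1 : Lam x = 1 generalizing Lam
  · obtain ⟨C, hC, hCx⟩ := exists_congrMap_apply_eq_one Lam hx
    rw [← hess_congrMap Lam hC]
    exact this (congrMap_injective Lam hC hinj) (isSymm_congrMap_apply Lam hsym)
      (posDef_congrMap_apply Lam hC hx) hCx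
  refine .of_dotProduct_mulVec_pos (isHermitian_iff_isSymm.mpr (hess_isSymm Lam x))
    fun v hv => ?_
  have hv' : Lam v ≠ 0 := (map_ne_zero_iff Lam hinj).mpr hv
  simpa [dotProduct_hess_mulVec, hx1, (hsym v).eq] using trace_transpose_mul_self_pos hv'

theorem one_sub_locNorm_mul_locNorm_le (hsym : ∀ v, (Lam v).IsSymm) {x y : Fin U → ℝ}
    (hx : (Lam x).PosDef) (hy : (Lam y).PosDef) (v : Fin U → ℝ) :
    (1 - locNorm Lam x (x - y)) * locNorm Lam y v ≤ locNorm Lam x v := by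
  wlog hx1 : Lam x = 1 generalizing Lam
  · obtain ⟨C, hC, hCx⟩ := exists_congrMap_apply_eq_one Lam hx
    simpa only [locNorm_congrMap Lam hC] using this (isSymm_congrMap_apply Lam hsym)
      (posDef_congrMap_apply Lam hC hx) (posDef_congrMap_apply Lam hC hy) hCx
  set τ := locNorm Lam x (x - y)
  rcases le_or_gt 1 τ with hτ | hτ
  · exact (mul_nonpos_of_nonpos_of_nonneg (sub_nonpos.mpr hτ) (Real.sqrt_nonneg _)).trans
      (Real.sqrt_nonneg _)
  have hM : (1 - Lam y)ᵀ = 1 - Lam y := by rw [← hx1, ← map_sub, (hsym _).eq]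
  have hYτ : ((1 - Lam y) * (1 - Lam y)).trace ≤ τ ^ 2 := by
    have hτ_eq : τ = √((1 - Lam y) * (1 - Lam y)).trace := by
      simp only [τ, locNorm, dotProduct_hess_mulVec, map_sub, hx1, inv_one, Matrix.one_mul,
        Matrix.mul_one]
    have h0 := trace_transpose_mul_self_nonneg (1 - Lam y)
    rw [hM] at h0
    rw [hτ_eq, Real.sq_sqrt h0]
  have key := hy.trace_inv_mul_inv_mul_le (hsym v) (Real.sqrt_nonneg _) hτ hYτ
  simp only [locNorm, dotProduct_hess_mulVec, hx1, inv_one, Matrix.mul_one, Matrix.one_mul]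
  rw [← Real.sqrt_sq (sub_pos.mpr hτ).le, ← Real.sqrt_mul (sq_nonneg _)]
  exact Real.sqrt_le_sqrt key

theorem grad_sub_dotProduct_le (hsym : ∀ v, (Lam v).IsSymm) {x y : Fin U → ℝ}
    (hx : (Lam x).PosDef) (hy : (Lam y).PosDef) (u : Fin U → ℝ) :
    (grad Lam y - grad Lam x) ⬝ᵥ u ≤ locNorm Lam y (x - y) * locNorm Lam x u := by
  wlog hx1 : Lam x = 1 generalizing Lam
  · obtain ⟨C, hC, hCx⟩ := exists_congrMap_apply_eq_one Lam hx
    simpa only [locNorm_congrMap Lam hC, grad_congrMap Lam hC] using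
      this (isSymm_congrMap_apply Lam hsym) (posDef_congrMap_apply Lam hC hx)
        (posDef_congrMap_apply Lam hC hy) hCx
  set Y := Lam y
  have hY : IsUnit Y.det := hy.det_pos.ne'.isUnit
  have hX : (1 - Y⁻¹)ᵀ = 1 - Y⁻¹ := by
    rw [transpose_sub, transpose_one, transpose_nonsing_inv, (hsym y).eq]
  have hgrad : (grad Lam y - grad Lam x) ⬝ᵥ u = ((1 - Y⁻¹)ᵀ * Lam u).trace := by
    rw [sub_dotProduct, grad_dotProduct, grad_dotProduct, hx1, inv_one, hX, Matrix.sub_mul,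
      trace_sub, Matrix.one_mul]
    ring
  have hy' : ((1 - Y⁻¹)ᵀ * (1 - Y⁻¹)).trace = (x - y) ⬝ᵥ hess Lam y *ᵥ (x - y) := by
    have e : Y⁻¹ * (1 - Y) = -(1 - Y⁻¹) := by
      rw [Matrix.mul_sub, Matrix.mul_one, nonsing_inv_mul _ hY]
      abel
    rw [dotProduct_hess_mulVec, map_sub, hx1, hX, Matrix.mul_assoc (Y⁻¹ * (1 - Y)), e,
      neg_mul_neg]
  have hx' : ((Lam u)ᵀ * Lam u).trace = u ⬝ᵥ hess Lam x *ᵥ u := by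
    rw [dotProduct_hess_mulVec, hx1, inv_one, Matrix.one_mul, Matrix.mul_one, (hsym u).eq]
  rw [hgrad, locNorm, locNorm, ← hy', ← hx']
  exact trace_transpose_mul_le _ _

theorem one_sub_locNorm_mul_dualNorm_le (hinj : Function.Injective Lam)
    (hsym : ∀ v, (Lam v).IsSymm) {x y : Fin U → ℝ} (hx : (Lam x).PosDef) (hy : (Lam y).PosDef)
    (e : Fin U → ℝ) {Δc : ℝ} (hΔc : 0 ≤ Δc) :
    (1 - locNorm Lam x (x - y)) * dualNorm Lam x (grad Lam y - grad Lam x + Δc • e) ≤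
      locNorm Lam x (x - y) + Δc * dualNorm Lam y e := by
  have hτ0 : 0 ≤ locNorm Lam x (x - y) := Real.sqrt_nonneg _
  have hD : 0 ≤ Δc * dualNorm Lam y e := mul_nonneg hΔc (Real.sqrt_nonneg _)
  rcases le_or_gt 1 (locNorm Lam x (x - y)) with hτ | hτ
  · exact (mul_nonpos_of_nonpos_of_nonneg (sub_nonpos.mpr hτ) (Real.sqrt_nonneg _)).trans
      (by positivity)
  have hc : 0 < 1 - locNorm Lam x (x - y) := sub_pos.mpr hτ
  rw [← le_div_iff₀' hc]
  refine (hess_posDef hinj hsym hx).sqrt_dotProduct_inv_mulVec_le (by positivity) fun v => ?_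
  change _ ≤ _ * locNorm Lam x v
  have hgrad := grad_sub_dotProduct_le hsym hx hy v
  have he : e ⬝ᵥ v ≤ dualNorm Lam y e * locNorm Lam y v :=
    (hess_posDef hinj hsym hy).dotProduct_le_sqrt_mul_sqrt e v
  have hxy := one_sub_locNorm_mul_locNorm_le hsym hx hy (x - y)
  have hv := one_sub_locNorm_mul_locNorm_le hsym hx hy v
  have hvx : 0 ≤ locNorm Lam x v := Real.sqrt_nonneg _
  rw [add_dotProduct, smul_dotProduct, smul_eq_mul, div_mul_eq_mul_div, le_div_iff₀ hc]
  nlinarith [mul_le_mul_of_nonneg_right hxy hvx, mul_le_mul_of_nonneg_left hv hD,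
    mul_le_mul_of_nonneg_left hgrad hc.le, mul_le_mul_of_nonneg_left he (mul_nonneg hΔc hc.le)]

end SelfConcordance

theorem rho_le {r τ D : ℝ} (hr0 : 0 < r) (hr : r ≤ 1 / 4) (hτ : τ ≤ r ^ 2 / (1 - 2 * r))
    (h : (1 - τ) * (r / (r + 1)) ≤ τ + D) :
    r * (1 - 3 * r - 2 * r ^ 2) / (1 - r - 2 * r ^ 2) ≤ D := by
  have h2r : 0 < 1 - 2 * r := by linarith
  have hτ' : τ * (1 - 2 * r) ≤ r ^ 2 := (le_div_iff₀ h2r).mp hτ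
  have h' : (1 - τ) * r ≤ (τ + D) * (r + 1) := by
    rwa [mul_div_assoc', div_le_iff₀ (by linarith)] at h
  rw [div_le_iff₀ (by nlinarith)]
  nlinarith [mul_le_mul_of_nonneg_left h' h2r.le,
    mul_le_mul_of_nonneg_left hτ' (by linarith : 0 ≤ 2 * r + 1)]

theorem stmt14_general {U L : ℕ}
    (Lam : (Fin U → ℝ) →ₗ[ℝ] Matrix (Fin L) (Fin L) ℝ)
    (hinj : Function.Injective Lam) (hsym : ∀ v, (Lam v).IsSymm)
    (r : ℝ) (hr0 : 0 < r) (hr : r ≤ 1 / 4)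
    (ρ : ℝ) (hρ : ρ = r * (1 - 3 * r - 2 * r ^ 2) / (1 - r - 2 * r ^ 2))
    (xp y : Fin U → ℝ) (hxp : (Lam xp).PosDef) (hy : (Lam y).PosDef)
    (s : Fin U → ℝ) (hs : s = -grad Lam y)
    (h1 : locNorm Lam xp (xp - y) ≤ r ^ 2 / (1 - 2 * r))
    (e : Fin U → ℝ) (Δc : ℝ) (hΔc : 0 ≤ Δc)
    (sp : Fin U → ℝ) (hsp : sp = s - Δc • e)
    (h2 : locNorm Lam xp (xp - (hess Lam xp)⁻¹.mulVec sp) = r / (r + 1)) :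
    ρ ≤ Δc * dualNorm Lam y e := by
  have hH := hess_posDef hinj hsym hxp
  have hres : dualNorm Lam xp (grad Lam y - grad Lam xp + Δc • e) = r / (r + 1) := by
    have hw : -grad Lam xp - sp = grad Lam y - grad Lam xp + Δc • e := by
      rw [hsp, hs]
      abel
    rw [← h2, sub_hess_inv_mulVec_eq Lam hH.det_pos.ne'.isUnit hxp.det_pos.ne'.isUnit, hw,
      locNorm, hH.inv_mulVec_dotProduct_mulVec_inv_mulVec, dualNorm]
  rw [hρ]
  exact rho_le hr0 hr h1 (hres ▸ one_sub_locNorm_mul_dualNorm_le hinj hsym hxp hy e hΔc)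

/-- per-iteration improvement: with `s = -g(y)`, `s₊ = s − Δc·e` and
`‖x₊ − H(x₊)⁻¹s₊‖_{x₊} = r/(r+1)`, one has `Δc·‖e‖*_y ≥ ρ_r`. -/
theorem stmt14 {U L : ℕ} (hU : 0 < U) (hL : 0 < L)
    (Lam : (Fin U → ℝ) →ₗ[ℝ] Matrix (Fin L) (Fin L) ℝ)
    (hinj : Function.Injective Lam) (hsym : ∀ v, (Lam v).IsSymm)
    (r : ℝ) (hr0 : 0 < r) (hr : r ≤ 1 / 4)
    (ρ : ℝ) (hρ : ρ = r * (1 - 3 * r - 2 * r ^ 2) / (1 - r - 2 * r ^ 2))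
    (xp y : Fin U → ℝ) (hxp : (Lam xp).PosDef) (hy : (Lam y).PosDef)
    (s : Fin U → ℝ) (hs : s = -grad Lam y)
    (h1 : locNorm Lam xp (xp - y) ≤ r ^ 2 / (1 - 2 * r))
    (e : Fin U → ℝ) (Δc : ℝ) (hΔc : 0 ≤ Δc)
    (sp : Fin U → ℝ) (hsp : sp = s - Δc • e)
    (h2 : locNorm Lam xp (xp - (hess Lam xp)⁻¹.mulVec sp) = r / (r + 1)) :
    ρ ≤ Δc * dualNorm Lam y e :=
  stmt14_general Lam hinj hsym r hr0 hr ρ hρ xp y hxp hy s hs h1 e Δc hΔc sp hsp h2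
end

section
/- For every integer d ≥ 1 and every w ∈ ℝ^{2d+1}, one has tr(Λ₁(w)·Λ₁(w)) ≥ ((3 − √5)/4)·‖w‖², where ‖w‖ is the Euclidean norm. (This yields the lower bound k₂ ≥ (1/2)·√(3 − √5) for the smallest singular value of the Chebyshev-basis Hankel+Toeplitz operator.) -/
open Matrix

/-- The first block of the Chebyshev-basis operator `Λ` for nonnegative
polynomials of degree `2d` on `[−1,1]` with weights `(1, 1 − z²)`:
`Λ₁(w)_{i,j} = (w_{i+j} + w_{|i−j|})/2`.  Here `i.1 - j.1 + (j.1 - i.1)`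
(truncated subtraction) equals `|i − j|`. -/
noncomputable def lam1 (d : ℕ) (w : Fin (2 * d + 1) → ℝ) :
    Matrix (Fin (d + 1)) (Fin (d + 1)) ℝ :=
  Matrix.of fun i j =>
    (w ⟨i.1 + j.1, by have := i.isLt; have := j.isLt; omega⟩ +
      w ⟨i.1 - j.1 + (j.1 - i.1), by have := i.isLt; have := j.isLt; omega⟩) / 2

/-!
`tr(Λ₁(w)²)` is the sum of the squares of the entries of the symmetric matrix
`Λ₁(w)`. Keep only the first column above the last row, which gives `w_0, …, w_{d−1}`, and
the last row, which gives `(w_{d+k} + w_{d−k})/2` for `k = 0, …, d`. Pairing `w_{d−k}` with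
the row entry `(w_{d+k} + w_{d−k})/2` reduces the claim to the 2×2 inequality
`a² + ((a + b)/2)² ≥ c (a² + b²)`, whose optimal constant `c = (3 − √5)/4` is the smallest
eigenvalue of `[[5/4, 1/4], [1/4, 1/4]]`.
-/

noncomputable def hankelToeplitz (W : ℕ → ℝ) (i j : ℕ) : ℝ :=
  (W (i + j) + W (Nat.dist i j)) / 2

theorem hankelToeplitz_comm (W : ℕ → ℝ) (i j : ℕ) :
    hankelToeplitz W i j = hankelToeplitz W j i := by
  rw [hankelToeplitz, hankelToeplitz, add_comm i, Nat.dist_comm]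

theorem hankelToeplitz_zero_right (W : ℕ → ℝ) (i : ℕ) : hankelToeplitz W i 0 = W i := by
  rw [hankelToeplitz, add_zero, Nat.dist_zero_right, add_self_div_two]

theorem hankelToeplitz_succ_right {W : ℕ → ℝ} {d k : ℕ} (hk : k < d) :
    hankelToeplitz W d (k + 1) = (W (d + 1 + k) + W (d - 1 - k)) / 2 := by
  rw [hankelToeplitz, Nat.dist, show d + (k + 1) = d + 1 + k by omega,
    show d - (k + 1) + (k + 1 - d) = d - 1 - k by omega]

-- The difference of the two sides is `(√5 − 2)/4 · ((2 + √5) a + b)²`.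
theorem sq_add_sq_mul_le_sq_add_half_add_sq (a b : ℝ) :
    (3 - Real.sqrt 5) / 4 * (a ^ 2 + b ^ 2) ≤ a ^ 2 + ((b + a) / 2) ^ 2 := by
  have h5 : Real.sqrt 5 ^ 2 = 5 := Real.sq_sqrt (by norm_num)
  have h2 : 2 ≤ Real.sqrt 5 := by nlinarith [Real.sqrt_nonneg 5]
  nlinarith [mul_nonneg (sub_nonneg.2 h2) (sq_nonneg ((2 + Real.sqrt 5) * a + b))]

theorem sum_range_two_mul_add_one_eq (g : ℕ → ℝ) (d : ℕ) :
    ∑ k ∈ Finset.range (2 * d + 1), g k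
      = ∑ k ∈ Finset.range d, (g (d - 1 - k) + g (d + 1 + k)) + g d := by
  rw [show 2 * d + 1 = d + 1 + d by omega, Finset.sum_range_add, Finset.sum_range_succ,
    ← Finset.sum_range_reflect g d, Finset.sum_add_distrib]
  ring

theorem sum_col_zero_add_sum_row_le_sum_sum (f : ℕ → ℕ → ℝ) (hf : ∀ i j, 0 ≤ f i j) (d : ℕ) :
    ∑ i ∈ Finset.range d, f i 0 + ∑ j ∈ Finset.range (d + 1), f d j
      ≤ ∑ i ∈ Finset.range (d + 1), ∑ j ∈ Finset.range (d + 1), f i j := by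
  rw [Finset.sum_range_succ (fun i => ∑ j ∈ Finset.range (d + 1), f i j) d]
  refine add_le_add (Finset.sum_le_sum fun i _ => ?_) le_rfl
  exact Finset.single_le_sum (fun j _ => hf i j) (Finset.mem_range.2 (Nat.succ_pos d))

theorem sum_sq_le_sum_sum_hankelToeplitz_sq (W : ℕ → ℝ) (d : ℕ) :
    (3 - Real.sqrt 5) / 4 * ∑ k ∈ Finset.range (2 * d + 1), W k ^ 2
      ≤ ∑ i ∈ Finset.range (d + 1), ∑ j ∈ Finset.range (d + 1), hankelToeplitz W i j ^ 2 := by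
  set c := (3 - Real.sqrt 5) / 4
  have hc : c ≤ 1 := by have := Real.sqrt_nonneg 5; simp only [c]; linarith
  have hpair : ∀ k ∈ Finset.range d, c * (W (d - 1 - k) ^ 2 + W (d + 1 + k) ^ 2)
      ≤ hankelToeplitz W (d - 1 - k) 0 ^ 2 + hankelToeplitz W d (k + 1) ^ 2 := by
    intro k hk
    rw [hankelToeplitz_zero_right, hankelToeplitz_succ_right (Finset.mem_range.1 hk)]
    exact sq_add_sq_mul_le_sq_add_half_add_sq _ _
  have hcentre : c * W d ^ 2 ≤ hankelToeplitz W d 0 ^ 2 := by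
    rw [hankelToeplitz_zero_right]
    exact mul_le_of_le_one_left (sq_nonneg _) hc
  calc c * ∑ k ∈ Finset.range (2 * d + 1), W k ^ 2
      = ∑ k ∈ Finset.range d, c * (W (d - 1 - k) ^ 2 + W (d + 1 + k) ^ 2) + c * W d ^ 2 := by
        rw [sum_range_two_mul_add_one_eq, mul_add, Finset.mul_sum]
    _ ≤ ∑ k ∈ Finset.range d,
          (hankelToeplitz W (d - 1 - k) 0 ^ 2 + hankelToeplitz W d (k + 1) ^ 2)
          + hankelToeplitz W d 0 ^ 2 := add_le_add (Finset.sum_le_sum hpair) hcentre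
    _ = ∑ i ∈ Finset.range d, hankelToeplitz W i 0 ^ 2
          + ∑ j ∈ Finset.range (d + 1), hankelToeplitz W d j ^ 2 := by
        rw [Finset.sum_add_distrib, Finset.sum_range_reflect (fun i => hankelToeplitz W i 0 ^ 2),
          Finset.sum_range_succ' _ d]
        ring
    _ ≤ _ := sum_col_zero_add_sum_row_le_sum_sum _ (fun _ _ => sq_nonneg _) d

theorem lam1_apply {d : ℕ} {w : Fin (2 * d + 1) → ℝ} {W : ℕ → ℝ}
    (hW : ∀ k : Fin (2 * d + 1), W k = w k) (i j : Fin (d + 1)) : lam1 d w i j = hankelToeplitz W i j := by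
  rw [hankelToeplitz, hW ⟨i + j, by omega⟩, hW ⟨Nat.dist i j, by unfold Nat.dist; omega⟩]
  rfl

theorem stmt18_general (d : ℕ) (w : Fin (2 * d + 1) → ℝ) :
    ((3 - Real.sqrt 5) / 4) * (w ⬝ᵥ w) ≤ (lam1 d w * lam1 d w).trace := by
  set W := Function.extend Fin.val w 0
  have hW : ∀ k : Fin (2 * d + 1), W k = w k := Fin.val_injective.extend_apply w 0
  have hnorm : w ⬝ᵥ w = ∑ k ∈ Finset.range (2 * d + 1), W k ^ 2 := by
    rw [dotProduct, ← Fin.sum_univ_eq_sum_range]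
    simp only [hW, sq]
  have htrace : (lam1 d w * lam1 d w).trace
      = ∑ i ∈ Finset.range (d + 1), ∑ j ∈ Finset.range (d + 1), hankelToeplitz W i j ^ 2 := by
    rw [trace, ← Fin.sum_univ_eq_sum_range]
    refine Finset.sum_congr rfl fun i _ => ?_
    rw [diag, mul_apply, ← Fin.sum_univ_eq_sum_range (fun j => hankelToeplitz W i j ^ 2)]
    simp only [lam1_apply hW, hankelToeplitz_comm W _ i, sq]
  rw [hnorm, htrace]
  exact sum_sq_le_sum_sum_hankelToeplitz_sq W d

/-- `tr(Λ₁(w)²) ≥ ((3 − √5)/4)·‖w‖²` (Euclidean norm), giving the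
lower bound `k₂ ≥ (1/2)·√(3 − √5)` on the smallest singular value of `Λ₁`. -/
theorem stmt18 (d : ℕ) (hd : 1 ≤ d) (w : Fin (2 * d + 1) → ℝ) :
    ((3 - Real.sqrt 5) / 4) * (w ⬝ᵥ w) ≤ (lam1 d w * lam1 d w).trace :=
  stmt18_general d w
end
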